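/- Each of the eight vector fields X₁, …, X₈ on ℝ⁶ is a symmetry of the rule-A distribution 𝒟 = Span(Z₁, Z₂, Z₃): for every k ∈ {1,…,8}, every i ∈ {1,2,3}, and every point m ∈ ℝ⁶, the vector [X_k, Zᵢ](m) lies in the real linear span of Z₁(m), Z₂(m), Z₃(m). -/
import Mathlib

def xc (i : Fin 3) : Fin 6 := ⟨2 * i.val, by have := i.isLt; omega⟩

def yc (i : Fin 3) : Fin 6 := ⟨2 * i.val + 1, by have := i.isLt; omega⟩

noncomputable def lieBracket (V W : (Fin 6 → ℝ) → (Fin 6 → ℝ)) :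
    (Fin 6 → ℝ) → (Fin 6 → ℝ) :=
  fun m => fderiv ℝ W m (V m) - fderiv ℝ V m (W m)

/-- Rule-A vector fields. -/
def ZA (i : Fin 3) (m : Fin 6 → ℝ) : Fin 6 → ℝ := fun j =>
  if j = xc i then m (xc (i + 1)) - m (xc i)
  else if j = yc i then m (yc (i + 1)) - m (yc i)
  else 0

/-- The eight symmetry vector fields `X₁,…,X₈` on ℝ⁶ with coordinates
`m = (x₁,y₁,x₂,y₂,x₃,y₃)` (indices `0,…,5`). -/
def Xf : Fin 8 → (Fin 6 → ℝ) → (Fin 6 → ℝ) :=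
  ![fun _ => ![1, 0, 1, 0, 1, 0],
    fun _ => ![0, 1, 0, 1, 0, 1],
    fun m => ![m 1, 0, m 3, 0, m 5, 0],
    fun m => ![0, m 0, 0, m 2, 0, m 4],
    fun m => ![m 0, 0, m 2, 0, m 4, 0],
    fun m => ![0, m 1, 0, m 3, 0, m 5],
    fun m => ![m 0 * m 1, m 1 ^ 2, m 2 * m 3, m 3 ^ 2, m 4 * m 5, m 5 ^ 2],
    fun m => ![m 0 ^ 2, m 0 * m 1, m 2 ^ 2, m 2 * m 3, m 4 ^ 2, m 4 * m 5]]

/- Auxiliary machinery -/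

@[simp] lemma vec6_app0 {α : Type*} (a b c d e f : α) : ![a, b, c, d, e, f] 0 = a := rfl
@[simp] lemma vec6_app1 {α : Type*} (a b c d e f : α) : ![a, b, c, d, e, f] 1 = b := rfl
@[simp] lemma vec6_app2 {α : Type*} (a b c d e f : α) : ![a, b, c, d, e, f] 2 = c := rfl
@[simp] lemma vec6_app3 {α : Type*} (a b c d e f : α) : ![a, b, c, d, e, f] 3 = d := rfl
@[simp] lemma vec6_app4 {α : Type*} (a b c d e f : α) : ![a, b, c, d, e, f] 4 = e := rfl
@[simp] lemma vec6_app5 {α : Type*} (a b c d e f : α) : ![a, b, c, d, e, f] 5 = f := rfl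

noncomputable def pr (j : Fin 6) : (Fin 6 → ℝ) →L[ℝ] ℝ :=
  ContinuousLinearMap.proj j

lemma pr_hasFDerivAt (j : Fin 6) (m : Fin 6 → ℝ) :
    HasFDerivAt (fun v : Fin 6 → ℝ => v j) (pr j) m := (pr j).hasFDerivAt

lemma ZA0 (m : Fin 6 → ℝ) : ZA 0 m = ![m 2 - m 0, m 3 - m 1, 0, 0, 0, 0] := by
  funext j; fin_cases j <;> rfl
lemma ZA1 (m : Fin 6 → ℝ) : ZA 1 m = ![0, 0, m 4 - m 2, m 5 - m 3, 0, 0] := by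
  funext j; fin_cases j <;> rfl
lemma ZA2 (m : Fin 6 → ℝ) : ZA 2 m = ![0, 0, 0, 0, m 0 - m 4, m 1 - m 5] := by
  funext j; fin_cases j <;> rfl

noncomputable def ZL (i : Fin 3) : (Fin 6 → ℝ) →L[ℝ] (Fin 6 → ℝ) :=
  ContinuousLinearMap.pi fun j =>
    if j = xc i then pr (xc (i + 1)) - pr (xc i)
    else if j = yc i then pr (yc (i + 1)) - pr (yc i)
    else 0

lemma ZL_apply (i : Fin 3) (v : Fin 6 → ℝ) : ZL i v = ZA i v := by
  funext j
  simp only [ZL, ZA, ContinuousLinearMap.pi_apply]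
  split_ifs <;> simp [pr]

lemma fderiv_ZA (i : Fin 3) (m : Fin 6 → ℝ) : fderiv ℝ (ZA i) m = ZL i := by
  rw [show ZA i = ⇑(ZL i) from funext fun v => (ZL_apply i v).symm]
  exact (ZL i).fderiv

/-- membership helper -/
lemma smul_ZA_mem (i : Fin 3) (c : ℝ) (m : Fin 6 → ℝ) :
    c • ZA i m ∈ Submodule.span ℝ ({ZA 0 m, ZA 1 m, ZA 2 m} : Set (Fin 6 → ℝ)) := by
  refine Submodule.smul_mem _ _ (Submodule.subset_span ?_)
  fin_cases i <;> simp

/- derivatives of the eight fields -/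

noncomputable def D0 : (Fin 6 → ℝ) →L[ℝ] (Fin 6 → ℝ) := 0

lemma hD0 (m : Fin 6 → ℝ) :
    HasFDerivAt (fun _ : Fin 6 → ℝ => (![1, 0, 1, 0, 1, 0] : Fin 6 → ℝ)) D0 m :=
  hasFDerivAt_const _ _

lemma hD1 (m : Fin 6 → ℝ) :
    HasFDerivAt (fun _ : Fin 6 → ℝ => (![0, 1, 0, 1, 0, 1] : Fin 6 → ℝ)) D0 m :=
  hasFDerivAt_const _ _

noncomputable def D2 : (Fin 6 → ℝ) →L[ℝ] (Fin 6 → ℝ) :=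
  ContinuousLinearMap.pi ![pr 1, 0, pr 3, 0, pr 5, 0]

lemma hD2 (m : Fin 6 → ℝ) :
    HasFDerivAt (fun m : Fin 6 → ℝ => (![m 1, 0, m 3, 0, m 5, 0] : Fin 6 → ℝ)) D2 m := by
  rw [hasFDerivAt_pi']
  intro j
  fin_cases j <;> simp [D2, ContinuousLinearMap.proj_pi] <;>
    first
    | exact hasFDerivAt_const _ _
    | exact pr_hasFDerivAt _ m

noncomputable def D3 : (Fin 6 → ℝ) →L[ℝ] (Fin 6 → ℝ) :=
  ContinuousLinearMap.pi ![0, pr 0, 0, pr 2, 0, pr 4]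

lemma hD3 (m : Fin 6 → ℝ) :
    HasFDerivAt (fun m : Fin 6 → ℝ => (![0, m 0, 0, m 2, 0, m 4] : Fin 6 → ℝ)) D3 m := by
  rw [hasFDerivAt_pi']
  intro j
  fin_cases j <;> simp [D3, ContinuousLinearMap.proj_pi] <;>
    first
    | exact hasFDerivAt_const _ _
    | exact pr_hasFDerivAt _ m

noncomputable def D4 : (Fin 6 → ℝ) →L[ℝ] (Fin 6 → ℝ) :=
  ContinuousLinearMap.pi ![pr 0, 0, pr 2, 0, pr 4, 0]

lemma hD4 (m : Fin 6 → ℝ) :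
    HasFDerivAt (fun m : Fin 6 → ℝ => (![m 0, 0, m 2, 0, m 4, 0] : Fin 6 → ℝ)) D4 m := by
  rw [hasFDerivAt_pi']
  intro j
  fin_cases j <;> simp [D4, ContinuousLinearMap.proj_pi] <;>
    first
    | exact hasFDerivAt_const _ _
    | exact pr_hasFDerivAt _ m

noncomputable def D5 : (Fin 6 → ℝ) →L[ℝ] (Fin 6 → ℝ) :=
  ContinuousLinearMap.pi ![0, pr 1, 0, pr 3, 0, pr 5]

lemma hD5 (m : Fin 6 → ℝ) :
    HasFDerivAt (fun m : Fin 6 → ℝ => (![0, m 1, 0, m 3, 0, m 5] : Fin 6 → ℝ)) D5 m := by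
  rw [hasFDerivAt_pi']
  intro j
  fin_cases j <;> simp [D5, ContinuousLinearMap.proj_pi] <;>
    first
    | exact hasFDerivAt_const _ _
    | exact pr_hasFDerivAt _ m

noncomputable def D6 (m : Fin 6 → ℝ) : (Fin 6 → ℝ) →L[ℝ] (Fin 6 → ℝ) :=
  ContinuousLinearMap.pi
    ![m 0 • pr 1 + m 1 • pr 0, m 1 • pr 1 + m 1 • pr 1,
      m 2 • pr 3 + m 3 • pr 2, m 3 • pr 3 + m 3 • pr 3,
      m 4 • pr 5 + m 5 • pr 4, m 5 • pr 5 + m 5 • pr 5]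

lemma hD6 (m : Fin 6 → ℝ) :
    HasFDerivAt
      (fun m : Fin 6 → ℝ =>
        (![m 0 * m 1, m 1 ^ 2, m 2 * m 3, m 3 ^ 2, m 4 * m 5, m 5 ^ 2] : Fin 6 → ℝ))
      (D6 m) m := by
  rw [hasFDerivAt_pi']
  intro j
  fin_cases j <;>
    simp only [D6, ContinuousLinearMap.proj_pi, vec6_app0, vec6_app1, vec6_app2,
      vec6_app3, vec6_app4, vec6_app5, pow_two] <;>
    exact (pr_hasFDerivAt _ m).mul (pr_hasFDerivAt _ m)

noncomputable def D7 (m : Fin 6 → ℝ) : (Fin 6 → ℝ) →L[ℝ] (Fin 6 → ℝ) :=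
  ContinuousLinearMap.pi
    ![m 0 • pr 0 + m 0 • pr 0, m 0 • pr 1 + m 1 • pr 0,
      m 2 • pr 2 + m 2 • pr 2, m 2 • pr 3 + m 3 • pr 2,
      m 4 • pr 4 + m 4 • pr 4, m 4 • pr 5 + m 5 • pr 4]

lemma hD7 (m : Fin 6 → ℝ) :
    HasFDerivAt
      (fun m : Fin 6 → ℝ =>
        (![m 0 ^ 2, m 0 * m 1, m 2 ^ 2, m 2 * m 3, m 4 ^ 2, m 4 * m 5] : Fin 6 → ℝ))
      (D7 m) m := by
  rw [hasFDerivAt_pi']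
  intro j
  fin_cases j <;>
    simp only [D7, ContinuousLinearMap.proj_pi, vec6_app0, vec6_app1, vec6_app2,
      vec6_app3, vec6_app4, vec6_app5, pow_two] <;>
    exact (pr_hasFDerivAt _ m).mul (pr_hasFDerivAt _ m)

/- the bracket computations -/

lemma bracket_eq (V : (Fin 6 → ℝ) → (Fin 6 → ℝ)) (D : (Fin 6 → ℝ) →L[ℝ] (Fin 6 → ℝ))
    (i : Fin 3) (m : Fin 6 → ℝ) (hV : HasFDerivAt V D m) :
    lieBracket V (ZA i) m = ZA i (V m) - D (ZA i m) := by
  unfold lieBracket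
  rw [fderiv_ZA, hV.fderiv, ZL_apply]

theorem ruleA_symmetries (k : Fin 8) (i : Fin 3) (m : Fin 6 → ℝ) :
    lieBracket (Xf k) (ZA i) m ∈
      Submodule.span ℝ ({ZA 0 m, ZA 1 m, ZA 2 m} : Set (Fin 6 → ℝ)) := by
  fin_cases k
  · show lieBracket (fun _ : Fin 6 → ℝ => (![1, 0, 1, 0, 1, 0] : Fin 6 → ℝ)) (ZA i) m ∈
        Submodule.span ℝ ({ZA 0 m, ZA 1 m, ZA 2 m} : Set (Fin 6 → ℝ))
    rw [bracket_eq _ _ _ _ (hD0 m)]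
    have : ZA i (![1, 0, 1, 0, 1, 0] : Fin 6 → ℝ) - D0 (ZA i m) = (0 : ℝ) • ZA i m := by
      fin_cases i <;> (funext j; fin_cases j) <;> simp [ZA0, ZA1, ZA2, D0]
    rw [this]; exact smul_ZA_mem i 0 m
  · show lieBracket (fun _ : Fin 6 → ℝ => (![0, 1, 0, 1, 0, 1] : Fin 6 → ℝ)) (ZA i) m ∈
        Submodule.span ℝ ({ZA 0 m, ZA 1 m, ZA 2 m} : Set (Fin 6 → ℝ))
    rw [bracket_eq _ _ _ _ (hD1 m)]
    have : ZA i (![0, 1, 0, 1, 0, 1] : Fin 6 → ℝ) - D0 (ZA i m) = (0 : ℝ) • ZA i m := by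
      fin_cases i <;> (funext j; fin_cases j) <;> simp [ZA0, ZA1, ZA2, D0]
    rw [this]; exact smul_ZA_mem i 0 m
  · show lieBracket (fun m : Fin 6 → ℝ => (![m 1, 0, m 3, 0, m 5, 0] : Fin 6 → ℝ)) (ZA i) m ∈
        Submodule.span ℝ ({ZA 0 m, ZA 1 m, ZA 2 m} : Set (Fin 6 → ℝ))
    rw [bracket_eq _ _ _ _ (hD2 m)]
    have : ZA i (![m 1, 0, m 3, 0, m 5, 0] : Fin 6 → ℝ) - D2 (ZA i m) = (0 : ℝ) • ZA i m := by
      fin_cases i <;> (funext j; fin_cases j) <;>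
        simp [ZA0, ZA1, ZA2, D2, ContinuousLinearMap.pi_apply, pr]
    rw [this]; exact smul_ZA_mem i 0 m
  · show lieBracket (fun m : Fin 6 → ℝ => (![0, m 0, 0, m 2, 0, m 4] : Fin 6 → ℝ)) (ZA i) m ∈
        Submodule.span ℝ ({ZA 0 m, ZA 1 m, ZA 2 m} : Set (Fin 6 → ℝ))
    rw [bracket_eq _ _ _ _ (hD3 m)]
    have : ZA i (![0, m 0, 0, m 2, 0, m 4] : Fin 6 → ℝ) - D3 (ZA i m) = (0 : ℝ) • ZA i m := by
      fin_cases i <;> (funext j; fin_cases j) <;>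
        simp [ZA0, ZA1, ZA2, D3, ContinuousLinearMap.pi_apply, pr]
    rw [this]; exact smul_ZA_mem i 0 m
  · show lieBracket (fun m : Fin 6 → ℝ => (![m 0, 0, m 2, 0, m 4, 0] : Fin 6 → ℝ)) (ZA i) m ∈
        Submodule.span ℝ ({ZA 0 m, ZA 1 m, ZA 2 m} : Set (Fin 6 → ℝ))
    rw [bracket_eq _ _ _ _ (hD4 m)]
    have : ZA i (![m 0, 0, m 2, 0, m 4, 0] : Fin 6 → ℝ) - D4 (ZA i m) = (0 : ℝ) • ZA i m := by
      fin_cases i <;> (funext j; fin_cases j) <;>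
        simp [ZA0, ZA1, ZA2, D4, ContinuousLinearMap.pi_apply, pr]
    rw [this]; exact smul_ZA_mem i 0 m
  · show lieBracket (fun m : Fin 6 → ℝ => (![0, m 1, 0, m 3, 0, m 5] : Fin 6 → ℝ)) (ZA i) m ∈
        Submodule.span ℝ ({ZA 0 m, ZA 1 m, ZA 2 m} : Set (Fin 6 → ℝ))
    rw [bracket_eq _ _ _ _ (hD5 m)]
    have : ZA i (![0, m 1, 0, m 3, 0, m 5] : Fin 6 → ℝ) - D5 (ZA i m) = (0 : ℝ) • ZA i m := by
      fin_cases i <;> (funext j; fin_cases j) <;>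
        simp [ZA0, ZA1, ZA2, D5, ContinuousLinearMap.pi_apply, pr]
    rw [this]; exact smul_ZA_mem i 0 m
  · show lieBracket (fun m : Fin 6 → ℝ => (![m 0 * m 1, m 1 ^ 2, m 2 * m 3, m 3 ^ 2, m 4 * m 5, m 5 ^ 2] : Fin 6 → ℝ)) (ZA i) m ∈
        Submodule.span ℝ ({ZA 0 m, ZA 1 m, ZA 2 m} : Set (Fin 6 → ℝ))
    rw [bracket_eq _ _ _ _ (hD6 m)]
    have : ∃ c : ℝ, ZA i (![m 0 * m 1, m 1 ^ 2, m 2 * m 3, m 3 ^ 2, m 4 * m 5, m 5 ^ 2] :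
        Fin 6 → ℝ) - D6 m (ZA i m) = c • ZA i m := by
      fin_cases i
      · exact ⟨m 3 - m 1, by funext j; fin_cases j <;>
          (simp [ZA0, D6, ContinuousLinearMap.pi_apply, pr]; try ring)⟩
      · exact ⟨m 5 - m 3, by funext j; fin_cases j <;>
          (simp [ZA1, D6, ContinuousLinearMap.pi_apply, pr]; try ring)⟩
      · exact ⟨m 1 - m 5, by funext j; fin_cases j <;>
          (simp [ZA2, D6, ContinuousLinearMap.pi_apply, pr]; try ring)⟩
    obtain ⟨c, hc⟩ := this
    rw [hc]; exact smul_ZA_mem i c m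
  · show lieBracket (fun m : Fin 6 → ℝ => (![m 0 ^ 2, m 0 * m 1, m 2 ^ 2, m 2 * m 3, m 4 ^ 2, m 4 * m 5] : Fin 6 → ℝ)) (ZA i) m ∈
        Submodule.span ℝ ({ZA 0 m, ZA 1 m, ZA 2 m} : Set (Fin 6 → ℝ))
    rw [bracket_eq _ _ _ _ (hD7 m)]
    have : ∃ c : ℝ, ZA i (![m 0 ^ 2, m 0 * m 1, m 2 ^ 2, m 2 * m 3, m 4 ^ 2, m 4 * m 5] :
        Fin 6 → ℝ) - D7 m (ZA i m) = c • ZA i m := by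
      fin_cases i
      · exact ⟨m 2 - m 0, by funext j; fin_cases j <;>
          (simp [ZA0, D7, ContinuousLinearMap.pi_apply, pr]; try ring)⟩
      · exact ⟨m 4 - m 2, by funext j; fin_cases j <;>
          (simp [ZA1, D7, ContinuousLinearMap.pi_apply, pr]; try ring)⟩
      · exact ⟨m 0 - m 4, by funext j; fin_cases j <;>
          (simp [ZA2, D7, ContinuousLinearMap.pi_apply, pr]; try ring)⟩
    obtain ⟨c, hc⟩ := this
    rw [hc]; exact smul_ZA_mem i c m
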